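/- Let F : ℝ^d × ℝ^n → ℝ be L-smooth (its gradient is L-Lipschitz in (θ,v)) and suppose v ↦ F(θ, v) is μ-strongly concave on ℝ^n for every θ ∈ ℝ^d. Let κ = L/μ and define v* : ℝ^d → ℝ^n by v*(θ) = argmax_{v ∈ ℝ^n} F(θ, v). Then v* is well defined and κ-Lipschitz: ‖v*(θ) − v*(θ')‖ ≤ κ‖θ − θ'‖ for all θ, θ' ∈ ℝ^d. -/

import Mathlib

open scoped RealInnerProductSpace
open Set Filter
open scoped Topology

/-- First-order inequality for strongly concave differentiable functions. -/
lemma strong_concave_first_order {E : Type*} [NormedAddCommGroup E] [InnerProductSpace ℝ E]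
    [CompleteSpace E]
    {g : E → ℝ} {μ : ℝ} (hsc : StrongConcaveOn Set.univ μ g)
    {x p : E} (hg : HasGradientAt g p x) (y : E) :
    g y + μ / 2 * ‖x - y‖ ^ 2 ≤ g x + ⟪p, y - x⟫ := by
  have hF : HasFDerivAt g (InnerProductSpace.toDual ℝ E p) x :=
    hasGradientAt_iff_hasFDerivAt.mp hg
  have hline : HasDerivAt (fun t : ℝ => x + t • (y - x)) (y - x) 0 := by
    simpa using ((hasDerivAt_id (0 : ℝ)).smul_const (y - x)).const_add x
  have hφ : HasDerivAt (fun t : ℝ => g (x + t • (y - x))) ⟪p, y - x⟫ 0 := by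
    have hF' : HasFDerivAt g (InnerProductSpace.toDual ℝ E p) ((fun t : ℝ => x + t • (y - x)) 0) :=
      by simpa using hF
    simpa [InnerProductSpace.toDual_apply_apply, Function.comp_def] using hF'.comp_hasDerivAt 0 hline
  set φ : ℝ → ℝ := fun t => g (x + t • (y - x)) with hφdef
  have hslope : Tendsto (slope φ 0) (𝓝[>] 0) (𝓝 ⟪p, y - x⟫) :=
    (hasDerivAt_iff_tendsto_slope.mp hφ).mono_left
      (nhdsWithin_mono 0 (fun t ht => ne_of_gt ht))
  have hconst : Tendsto (fun t : ℝ => g y - g x + μ / 2 * (1 - t) * ‖x - y‖ ^ 2)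
      (𝓝[>] 0) (𝓝 (g y - g x + μ / 2 * (1 - 0) * ‖x - y‖ ^ 2)) := by
    apply Tendsto.mono_left _ nhdsWithin_le_nhds
    exact (Continuous.tendsto (by continuity) 0)
  have hle : g y - g x + μ / 2 * (1 - 0) * ‖x - y‖ ^ 2 ≤ ⟪p, y - x⟫ := by
    refine le_of_tendsto_of_tendsto hconst hslope ?_
    filter_upwards [Ioc_mem_nhdsGT (zero_lt_one)] with t ht
    obtain ⟨ht0, ht1⟩ := ht
    have hcc := hsc.2 (Set.mem_univ y) (Set.mem_univ x) (le_of_lt ht0)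
      (by linarith : (0:ℝ) ≤ 1 - t) (by ring)
    have hpt : t • y + (1 - t) • x = x + t • (y - x) := by
      rw [sub_smul, one_smul, smul_sub]; abel
    rw [hpt] at hcc
    have hφ0 : φ 0 = g x := by simp [hφdef]
    have hnrm : ‖y - x‖ = ‖x - y‖ := norm_sub_rev _ _
    rw [slope_def_field, sub_zero, hφ0, le_div_iff₀ ht0]
    simp only [smul_eq_mul] at hcc
    rw [hnrm] at hcc
    nlinarith [hcc]
  linarith [hle]

/-- A differentiable strongly concave function on a finite-dimensional space has a global max. -/
lemma strong_concave_exists_max {E : Type*} [NormedAddCommGroup E] [InnerProductSpace ℝ E]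
    [FiniteDimensional ℝ E] [CompleteSpace E] {g : E → ℝ} {μ : ℝ} (hμ : 0 < μ)
    (hsc : StrongConcaveOn Set.univ μ g) (hd : Differentiable ℝ g) :
    ∃ m, ∀ v, g v ≤ g m := by
  set p := gradient g 0 with hp
  have hpg : HasGradientAt g p 0 := (hd 0).hasGradientAt
  have hbound : ∀ v : E, g v ≤ g 0 + ‖p‖ * ‖v‖ - μ / 2 * ‖v‖ ^ 2 := by
    intro v
    have := strong_concave_first_order hsc hpg v
    have hips : ⟪p, v - 0⟫ ≤ ‖p‖ * ‖v‖ := by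
      simpa using real_inner_le_norm p v
    have hn : ‖(0 : E) - v‖ = ‖v‖ := by simp
    rw [hn] at this
    linarith
  set R : ℝ := 2 * ‖p‖ / μ + 1 with hR
  have hR0 : 0 ≤ R := by positivity
  obtain ⟨m, hmK, hm⟩ := (isCompact_closedBall (0 : E) R).exists_isMaxOn
    ⟨0, by simpa using hR0⟩ (hd.continuous.continuousOn)
  refine ⟨m, fun v => ?_⟩
  by_cases hv : v ∈ Metric.closedBall (0 : E) R
  · exact hm hv
  · have hvn : R < ‖v‖ := by
      simpa [Metric.mem_closedBall, dist_zero_right] using lt_of_not_ge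
        (fun h => hv (by simpa [Metric.mem_closedBall, dist_zero_right] using h))
    have h0m : g 0 ≤ g m := hm (by simpa using hR0)
    have hb := hbound v
    have hpn : (0:ℝ) ≤ ‖p‖ := norm_nonneg p
    have hRv : 2 * ‖p‖ / μ + 1 < ‖v‖ := by rw [hR] at hvn; exact hvn
    have hmul : 2 * ‖p‖ + μ < μ * ‖v‖ := by
      have := (div_lt_iff₀ hμ).mp (by linarith : 2 * ‖p‖ / μ < ‖v‖ - 1)
      nlinarith
    nlinarith [norm_nonneg v]

/-- The gradient vanishes at a global max. -/
lemma gradient_eq_zero_of_max {E : Type*} [NormedAddCommGroup E] [InnerProductSpace ℝ E]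
    [CompleteSpace E]
    {g : E → ℝ} {m : E} (hm : ∀ v, g v ≤ g m) : gradient g m = 0 := by
  have hmax : IsLocalMax g m :=
    (isMaxOn_iff.mpr (fun x _ => hm x)).isLocalMax Filter.univ_mem
  have h0 : fderiv ℝ g m = 0 := hmax.fderiv_eq_zero
  unfold gradient
  rw [h0]
  simp


private lemma sqrt_step {x y : ℝ} (hy : 0 ≤ y) (h : x ^ 2 ≤ y ^ 2) : x ≤ y := by
  nlinarith [sq_nonneg (x - y), sq_nonneg (x + y)]

private lemma div_step {L μ s r : ℝ} (hμ : 0 < μ) (hL : 0 < L) (hs : 0 ≤ s) (hr : 0 ≤ r)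
    (h : μ * s ^ 2 ≤ L * r * s) : s ≤ L / μ * r := by
  rcases eq_or_lt_of_le hs with hs0 | hs0
  · rw [← hs0]; positivity
  · have h2 : μ * s ≤ L * r := by
      have h3 : (μ * s) * s ≤ (L * r) * s := by nlinarith [h]
      exact le_of_mul_le_mul_right h3 hs0
    rw [div_mul_eq_mul_div, le_div_iff₀ hμ]
    linarith

/-- With `F` L-smooth on `ℝ^d × ℝ^n` and `v ↦ F(θ,v)` μ-strongly concave,
the argmax map `v*` is well defined (exists and is unique) and is `κ = L/μ`-Lipschitz. -/
theorem rsgda_statement_0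
    {d n : ℕ}
    (F : EuclideanSpace ℝ (Fin d) → EuclideanSpace ℝ (Fin n) → ℝ)
    (L μ : ℝ) (hL : 0 < L) (hμ : 0 < μ)
    -- F is differentiable jointly in (θ, v)
    (hdiff : Differentiable ℝ
      (fun q : EuclideanSpace ℝ (Fin d) × EuclideanSpace ℝ (Fin n) => F q.1 q.2))
    -- the (joint) gradient of F is L-Lipschitz for the ℓ² product norm
    (hsmooth : ∀ θ θ' v v',
      ‖gradient (fun t => F t v) θ - gradient (fun t => F t v') θ'‖ ^ 2
        + ‖gradient (fun w => F θ w) v - gradient (fun w => F θ' w) v'‖ ^ 2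
      ≤ L ^ 2 * (‖θ - θ'‖ ^ 2 + ‖v - v'‖ ^ 2))
    -- v ↦ F(θ, v) is μ-strongly concave on ℝ^n for every θ
    (hconc : ∀ θ, ConcaveOn ℝ Set.univ (fun v => F θ v + (μ / 2) * ‖v‖ ^ 2)) :
    ∃ vstar : EuclideanSpace ℝ (Fin d) → EuclideanSpace ℝ (Fin n),
      (∀ θ v, F θ v ≤ F θ (vstar θ)) ∧
      (∀ θ v, (∀ v', F θ v' ≤ F θ v) → v = vstar θ) ∧
      (∀ θ θ', ‖vstar θ - vstar θ'‖ ≤ (L / μ) * ‖θ - θ'‖) := by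
  have hdv : ∀ θ, Differentiable ℝ (fun v => F θ v) := fun θ =>
    (hdiff.comp ((differentiable_const θ).prodMk differentiable_id) :)
  have hsc : ∀ θ, StrongConcaveOn Set.univ μ (fun v => F θ v) :=
    fun θ => strongConcaveOn_iff_convex.mpr (hconc θ)
  have hex : ∀ θ, ∃ m, ∀ v, F θ v ≤ F θ m :=
    fun θ => strong_concave_exists_max hμ (hsc θ) (hdv θ)
  set vstar : EuclideanSpace ℝ (Fin d) → EuclideanSpace ℝ (Fin n) :=
    fun θ => (hex θ).choose with hvs
  have hmax : ∀ θ v, F θ v ≤ F θ (vstar θ) := fun θ => (hex θ).choose_spec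
  have hgrad0 : ∀ θ, gradient (fun w => F θ w) (vstar θ) = 0 :=
    fun θ => gradient_eq_zero_of_max (hmax θ)
  refine ⟨vstar, hmax, ?_, ?_⟩
  · intro θ v hv
    exact ((hsc θ).strictConcaveOn hμ).eq_of_isMaxOn
      (isMaxOn_iff.mpr fun x _ => hv x)
      (isMaxOn_iff.mpr fun x _ => hmax θ x) (Set.mem_univ v) (Set.mem_univ _)
  · intro θ θ'
    set a := vstar θ with ha
    set b := vstar θ' with hb
    -- key inequalities for F θ' at points a and b
    have h1 := strong_concave_first_order (hsc θ')
      ((hdv θ' b).hasGradientAt) a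
    rw [hgrad0 θ'] at h1
    simp only [inner_zero_left] at h1
    have h2 := strong_concave_first_order (hsc θ')
      ((hdv θ' a).hasGradientAt) b
    -- combine
    have hsum : μ * ‖a - b‖ ^ 2 ≤ ⟪gradient (fun w => F θ' w) a, b - a⟫ := by
      have hn : ‖b - a‖ = ‖a - b‖ := norm_sub_rev _ _
      rw [hn] at h1
      linarith
    -- bound the inner product
    have hqz : ⟪gradient (fun w => F θ' w) a, b - a⟫
        = ⟪gradient (fun w => F θ' w) a - gradient (fun w => F θ w) a, b - a⟫ := by
      rw [hgrad0 θ]; simp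
    have hsm := hsmooth θ θ' a a
    have hgn : ‖gradient (fun w => F θ w) a - gradient (fun w => F θ' w) a‖ ≤ L * ‖θ - θ'‖ := by
      refine sqrt_step (by positivity) ?_
      have h1' : (0:ℝ) ≤ ‖gradient (fun t => F t a) θ - gradient (fun t => F t a) θ'‖ ^ 2 :=
        sq_nonneg _
      simp only [sub_self, norm_zero, add_zero, ne_eq, OfNat.ofNat_ne_zero,
        not_false_eq_true, zero_pow] at hsm
      rw [mul_pow]
      linarith [hsm, h1']
    have hip : ⟪gradient (fun w => F θ' w) a, b - a⟫ ≤ L * ‖θ - θ'‖ * ‖a - b‖ := by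
      rw [hqz]
      calc ⟪gradient (fun w => F θ' w) a - gradient (fun w => F θ w) a, b - a⟫
          ≤ ‖gradient (fun w => F θ' w) a - gradient (fun w => F θ w) a‖ * ‖b - a‖ :=
            real_inner_le_norm _ _
        _ = ‖gradient (fun w => F θ w) a - gradient (fun w => F θ' w) a‖ * ‖a - b‖ := by
            rw [norm_sub_rev, norm_sub_rev b a]
        _ ≤ L * ‖θ - θ'‖ * ‖a - b‖ :=
            mul_le_mul_of_nonneg_right hgn (norm_nonneg _)
    have hkey : μ * ‖a - b‖ ^ 2 ≤ L * ‖θ - θ'‖ * ‖a - b‖ := le_trans hsum hip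
    exact div_step hμ hL (norm_nonneg _) (norm_nonneg _) hkey
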